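/- arXiv:1303.0250 — 2 statements merged into one kernel-verified Lean document; each statement's English description precedes it below -/
import Mathlib

section
/- Let Ω = ⋃_{n∈ℤ} [n − 2^{−|n|}, n + 2^{−|n|}] ⊆ ℝ. Then Ω has finite Lebesgue measure, Ω is unbounded, and |Ω ∩ (Ω + x)| > 0 for every x ∈ ℝ. -/
open MeasureTheory
open scoped Real ENNReal

noncomputable section

/-- The set `Ω = ⋃_{n∈ℤ} [n − 2^{−|n|}, n + 2^{−|n|}]` has finite Lebesgue measure, is
unbounded, and every translate of `Ω` meets `Ω` in a set of positive measure. -/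
theorem union_of_shrinking_intervals_translates_meet :
    let Ω : Set ℝ := ⋃ n : ℤ, Set.Icc ((n : ℝ) - 2 ^ (-|n|)) ((n : ℝ) + 2 ^ (-|n|))
    volume Ω < ∞ ∧ ¬ Bornology.IsBounded Ω ∧
      ∀ x : ℝ, 0 < volume (Ω ∩ ((fun w => w + x) '' Ω)) := by
  intro Ω
  have hr : ∀ n : ℤ, (0:ℝ) < 2 ^ (-|n|) := fun n => zpow_pos (by norm_num) _
  have hr1 : ∀ n : ℤ, (2:ℝ) ^ (-|n|) ≤ 1 := fun n =>
    zpow_le_one_of_nonpos₀ (by norm_num) (neg_nonpos.mpr (abs_nonneg n))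
  have hmem : ∀ n : ℤ, Set.Icc ((n:ℝ) - 2 ^ (-|n|)) ((n:ℝ) + 2 ^ (-|n|)) ⊆ Ω :=
    fun n z hz => Set.mem_iUnion.mpr ⟨n, hz⟩
  refine ⟨?_, ?_, ?_⟩
  · -- finite measure
    have h1 : volume Ω ≤ ∑' n : ℤ, volume (Set.Icc ((n:ℝ) - 2 ^ (-|n|)) ((n:ℝ) + 2 ^ (-|n|))) :=
      measure_iUnion_le _
    have h2 : ∀ n : ℤ, volume (Set.Icc ((n:ℝ) - 2 ^ (-|n|)) ((n:ℝ) + 2 ^ (-|n|)))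
        = ENNReal.ofReal (2 * 2 ^ (-|n|)) := by
      intro n
      rw [Real.volume_Icc]
      ring_nf
    have hs : Summable (fun n : ℤ => (2:ℝ) * 2 ^ (-|n|)) := by
      have hgeo : Summable (fun k : ℕ => (2:ℝ) * 2 ^ (-|(k:ℤ)|)) := by
        have : (fun k : ℕ => (2:ℝ) * 2 ^ (-|(k:ℤ)|)) = fun k : ℕ => 2 * (1/2 : ℝ) ^ k := by
          funext k
          rw [Int.abs_natCast, zpow_neg, zpow_natCast]
          rw [one_div, inv_pow]
        rw [this]
        exact (summable_geometric_of_lt_one (by norm_num) (by norm_num)).mul_left 2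
      refine Summable.of_nat_of_neg hgeo ?_
      simpa [abs_neg] using hgeo
    calc volume Ω ≤ ∑' n : ℤ, ENNReal.ofReal (2 * 2 ^ (-|n|)) := by
          rw [← funext h2]; exact h1
      _ = ENNReal.ofReal (∑' n : ℤ, 2 * 2 ^ (-|n|)) :=
          (ENNReal.ofReal_tsum_of_nonneg (fun n => by positivity) hs).symm
      _ < ∞ := ENNReal.ofReal_lt_top
  · -- unbounded
    intro hb
    obtain ⟨R, hR⟩ := isBounded_iff_forall_norm_le.mp hb
    have hn : ∀ n : ℤ, (n:ℝ) ∈ Ω := fun n =>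
      hmem n ⟨by linarith [hr n], by linarith [hr n]⟩
    have h1 := hR _ (hn (⌈R⌉ + 1))
    have h2 : R ≤ (⌈R⌉ : ℝ) := Int.le_ceil R
    rw [Real.norm_eq_abs] at h1
    have h3 : ((⌈R⌉ + 1 : ℤ) : ℝ) ≤ |((⌈R⌉ + 1 : ℤ) : ℝ)| := le_abs_self _
    push_cast at h1 h3
    linarith [abs_nonneg R, le_abs_self R]
  · -- translates meet
    intro x
    set n : ℤ := round x with hn
    have hnx : |x - n| ≤ 1/2 := by simpa using abs_sub_round x
    set r : ℝ := 2 ^ (-|n|) with hrdef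
    have hrpos : 0 < r := hr n
    have hrle : r ≤ 1 := hr1 n
    have hsub : Set.Icc ((n:ℝ) - r) ((n:ℝ) + r) ⊆ Ω ∩ ((fun w => w + x) '' Ω) := by
      intro y hy
      refine ⟨hmem n hy, ⟨y - x, ?_, by ring⟩⟩
      -- y - x ∈ Ω : |y - x| ≤ 3/2
      have h1 : |y - (n:ℝ)| ≤ r := by
        rw [abs_sub_le_iff]; constructor <;> [linarith [hy.1, hy.2]; linarith [hy.1, hy.2]]
      have h2 : |y - x| ≤ 3/2 := by
        have := abs_sub_le y (n:ℝ) x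
        have h3 : |(n:ℝ) - x| ≤ 1/2 := by rw [abs_sub_comm]; exact hnx
        calc |y - x| ≤ |y - (n:ℝ)| + |(n:ℝ) - x| := abs_sub_le _ _ _
          _ ≤ 3/2 := by linarith
      set z := y - x with hz
      rw [abs_le] at h2
      rcases le_or_gt z (-1) with h | h
      · refine hmem (-1) ⟨?_, ?_⟩
        · show ((-1:ℤ):ℝ) - 2 ^ (-|(-1:ℤ)|) ≤ z
          norm_num
          linarith [h2.1]
        · show z ≤ ((-1:ℤ):ℝ) + 2 ^ (-|(-1:ℤ)|)
          norm_num
          linarith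
      rcases le_or_gt z 1 with h' | h'
      · refine hmem 0 ⟨?_, ?_⟩
        · show ((0:ℤ):ℝ) - 2 ^ (-|(0:ℤ)|) ≤ z
          norm_num
          linarith
        · show z ≤ ((0:ℤ):ℝ) + 2 ^ (-|(0:ℤ)|)
          norm_num
          linarith
      · refine hmem 1 ⟨?_, ?_⟩
        · show ((1:ℤ):ℝ) - 2 ^ (-|(1:ℤ)|) ≤ z
          norm_num
          linarith
        · show z ≤ ((1:ℤ):ℝ) + 2 ^ (-|(1:ℤ)|)
          norm_num
          linarith [h2.2]
    calc (0:ℝ≥0∞) < ENNReal.ofReal (2 * r) := by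
          rw [ENNReal.ofReal_pos]; linarith
      _ = volume (Set.Icc ((n:ℝ) - r) ((n:ℝ) + r)) := by rw [Real.volume_Icc]; ring_nf
      _ ≤ _ := measure_mono hsub
end
end

section
/- For an integer k ≥ 4, let Ω_k = [−1,1] ∪ ⋃_{n∈ℤ, |n|>k} [n − 2^{−|n|}, n + 2^{−|n|}] ⊆ ℝ. Then Ω_k has finite Lebesgue measure, |Ω_k ∩ (Ω_k + x)| > 0 for every x ∈ ℝ with |x| ≥ k, and the set {x ∈ ℝ : |Ω_k ∩ (Ω_k + x)| = 0} has positive Lebesgue measure. -/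
open MeasureTheory
open scoped Real ENNReal

noncomputable section

/-- Auxiliary: rewrite the zpow as a nat pow. -/
lemma aux_zpow_natAbs (n : ℤ) : (2:ℝ) ^ (-|n|) = (1/2:ℝ) ^ n.natAbs := by
  rw [zpow_neg, Int.abs_eq_natAbs, zpow_natCast, ← inv_pow]
  norm_num

lemma aux_summable : Summable (fun n : ℤ => 2 * (1/2:ℝ) ^ n.natAbs) := by
  apply Summable.of_nat_of_neg
  · simpa using (summable_geometric_of_lt_one (by norm_num) (by norm_num : (1/2:ℝ) < 1)).mul_left 2
  · simpa using (summable_geometric_of_lt_one (by norm_num) (by norm_num : (1/2:ℝ) < 1)).mul_left 2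

/-- For `k ≥ 4`, the set `Ω_k = [−1,1] ∪ ⋃_{|n|>k} [n − 2^{−|n|}, n + 2^{−|n|}]` has finite
measure, translates by `x` with `|x| ≥ k` meet `Ω_k` in positive measure, yet the set of `x`
for which `Ω_k ∩ (Ω_k + x)` is null has positive measure. -/
theorem modified_union_of_shrinking_intervals (k : ℕ) (hk : 4 ≤ k) :
    let Ωk : Set ℝ := Set.Icc (-1 : ℝ) 1 ∪
      ⋃ n : ℤ, ⋃ (_ : (k : ℤ) < |n|), Set.Icc ((n : ℝ) - 2 ^ (-|n|)) ((n : ℝ) + 2 ^ (-|n|))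
    volume Ωk < ∞ ∧
      (∀ x : ℝ, (k : ℝ) ≤ |x| → 0 < volume (Ωk ∩ ((fun w => w + x) '' Ωk))) ∧
      0 < volume {x : ℝ | volume (Ωk ∩ ((fun w => w + x) '' Ωk)) = 0} := by
  intro Ωk
  have hk4 : (4:ℤ) ≤ (k:ℤ) := by exact_mod_cast hk
  have hpow_pos : ∀ m : ℤ, (0:ℝ) < 2 ^ m := fun m => zpow_pos two_pos m
  have hpow_le : ∀ n : ℤ, (k : ℤ) < |n| → (2:ℝ) ^ (-|n|) ≤ 1/32 := by
    intro n hn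
    have h5 : (5:ℤ) ≤ |n| := by linarith
    calc (2:ℝ) ^ (-|n|) ≤ 2 ^ (-5:ℤ) :=
          zpow_le_zpow_right₀ one_le_two (by linarith)
      _ = 1/32 := by norm_num
  have habs5 : ∀ n : ℤ, (k : ℤ) < |n| → (5:ℝ) ≤ |(n:ℝ)| := by
    intro n hn
    have h5 : (5:ℤ) ≤ |n| := by linarith
    exact_mod_cast h5
  -- membership criterion
  have hmem : ∀ y : ℝ, y ∈ Ωk ↔ (y ∈ Set.Icc (-1:ℝ) 1 ∨
      ∃ n : ℤ, (k:ℤ) < |n| ∧ y ∈ Set.Icc ((n:ℝ) - 2 ^ (-|n|)) ((n:ℝ) + 2 ^ (-|n|))) := by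
    intro y
    simp only [Ωk, Set.mem_union, Set.mem_iUnion, exists_prop]
  refine ⟨?_, ?_, ?_⟩
  · -- finite measure
    have h1 : volume Ωk ≤ volume (Set.Icc (-1:ℝ) 1) +
        ∑' n : ℤ, volume (⋃ (_ : (k:ℤ) < |n|),
          Set.Icc ((n : ℝ) - 2 ^ (-|n|)) ((n : ℝ) + 2 ^ (-|n|))) :=
      le_trans (measure_union_le _ _) (by gcongr; exact measure_iUnion_le _)
    have h2 : ∀ n : ℤ, volume (⋃ (_ : (k:ℤ) < |n|),
        Set.Icc ((n : ℝ) - 2 ^ (-|n|)) ((n : ℝ) + 2 ^ (-|n|))) ≤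
        ENNReal.ofReal (2 * (1/2:ℝ) ^ n.natAbs) := by
      intro n
      refine le_trans (measure_mono (Set.iUnion_subset fun _ => subset_rfl)) ?_
      rw [Real.volume_Icc]
      apply ENNReal.ofReal_le_ofReal
      rw [← aux_zpow_natAbs]
      ring_nf
      linarith [hpow_pos (-|n|)]
    have h3 : ∑' n : ℤ, volume (⋃ (_ : (k:ℤ) < |n|),
        Set.Icc ((n : ℝ) - 2 ^ (-|n|)) ((n : ℝ) + 2 ^ (-|n|))) ≤
        ∑' n : ℤ, ENNReal.ofReal (2 * (1/2:ℝ) ^ n.natAbs) := ENNReal.tsum_le_tsum h2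
    have h4 : ∑' n : ℤ, ENNReal.ofReal (2 * (1/2:ℝ) ^ n.natAbs) < ∞ := by
      rw [← ENNReal.ofReal_tsum_of_nonneg (fun n => by positivity) aux_summable]
      exact ENNReal.ofReal_lt_top
    calc volume Ωk ≤ _ := h1
      _ < ∞ := by
          apply ENNReal.add_lt_top.mpr
          exact ⟨by simp [Real.volume_Icc], lt_of_le_of_lt h3 h4⟩
  · -- positive measure of intersection for |x| ≥ k
    intro x hx
    rcases le_abs.mp hx with hxk | hxk
    · -- x ≥ k
      set n : ℤ := ⌊x⌋ + 1 with hn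
      have hn1 : x < (n:ℝ) := by rw [hn]; push_cast; linarith [Int.lt_floor_add_one x]
      have hn2 : (n:ℝ) ≤ x + 1 := by rw [hn]; push_cast; linarith [Int.floor_le x]
      have hkn : (k:ℤ) < n := by exact_mod_cast lt_of_le_of_lt hxk hn1
      have habs : |n| = n := abs_of_pos (by linarith)
      have hkabs : (k:ℤ) < |n| := by rw [habs]; exact hkn
      set ε : ℝ := 2 ^ (-|n|) with hε
      have hεpos : 0 < ε := hpow_pos _
      have hεle : ε ≤ 1/32 := hpow_le n hkabs
      have hsub : Set.Icc ((n:ℝ) - ε) (n:ℝ) ⊆ Ωk ∩ ((fun w => w + x) '' Ωk) := by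
        intro y hy
        obtain ⟨hy1, hy2⟩ := hy
        constructor
        · rw [hmem]
          exact Or.inr ⟨n, hkabs, ⟨hy1, by linarith⟩⟩
        · refine ⟨y - x, ?_, by ring⟩
          rw [hmem]
          exact Or.inl ⟨by linarith, by linarith⟩
      calc (0:ℝ≥0∞) < ENNReal.ofReal ε := ENNReal.ofReal_pos.mpr hεpos
        _ = volume (Set.Icc ((n:ℝ) - ε) (n:ℝ)) := by rw [Real.volume_Icc]; ring_nf
        _ ≤ _ := measure_mono hsub
    · -- x ≤ -k
      set n : ℤ := ⌈x⌉ - 1 with hn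
      have hn1 : (n:ℝ) < x := by rw [hn]; push_cast; linarith [Int.ceil_lt_add_one x]
      have hn2 : x - 1 ≤ (n:ℝ) := by rw [hn]; push_cast; linarith [Int.le_ceil x]
      have hkn : n < -(k:ℤ) := by
        have h : (n:ℝ) < -(k:ℝ) := by linarith
        exact_mod_cast h
      have habs : |n| = -n := abs_of_neg (by linarith)
      have hkabs : (k:ℤ) < |n| := by rw [habs]; linarith
      set ε : ℝ := 2 ^ (-|n|) with hε
      have hεpos : 0 < ε := hpow_pos _
      have hεle : ε ≤ 1/32 := hpow_le n hkabs
      have hsub : Set.Icc (n:ℝ) ((n:ℝ) + ε) ⊆ Ωk ∩ ((fun w => w + x) '' Ωk) := by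
        intro y hy
        obtain ⟨hy1, hy2⟩ := hy
        constructor
        · rw [hmem]
          exact Or.inr ⟨n, hkabs, ⟨by linarith, hy2⟩⟩
        · refine ⟨y - x, ?_, by ring⟩
          rw [hmem]
          exact Or.inl ⟨by linarith, by linarith⟩
      calc (0:ℝ≥0∞) < ENNReal.ofReal ε := ENNReal.ofReal_pos.mpr hεpos
        _ = volume (Set.Icc (n:ℝ) ((n:ℝ) + ε)) := by rw [Real.volume_Icc]; ring_nf
        _ ≤ _ := measure_mono hsub
  · -- the null-intersection set has positive measure
    have key : Set.Icc (9/4:ℝ) (11/4) ⊆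
        {x : ℝ | volume (Ωk ∩ ((fun w => w + x) '' Ωk)) = 0} := by
      intro x hx
      obtain ⟨hx1, hx2⟩ := hx
      have hempty : Ωk ∩ ((fun w => w + x) '' Ωk) = ∅ := by
        rw [Set.eq_empty_iff_forall_notMem]
        rintro y ⟨hy, w, hw, hwx⟩
        have hwx' : w + x = y := hwx
        have hzw : w = y - x := by linarith
        subst hzw
        rw [hmem] at hy hw
        rcases hy with ⟨hy1, hy2⟩ | ⟨n, hkn, hy1, hy2⟩ <;>
          rcases hw with ⟨hw1, hw2⟩ | ⟨m, hkm, hw1, hw2⟩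
        · linarith
        · have h5 := habs5 m hkm
          have hεm := hpow_le m hkm
          have hεm0 := hpow_pos (-|m|)
          rcases le_abs.mp h5 with h | h <;> linarith
        · have h5 := habs5 n hkn
          have hεn := hpow_le n hkn
          have hεn0 := hpow_pos (-|n|)
          rcases le_abs.mp h5 with h | h <;> linarith
        · have hεn := hpow_le n hkn
          have hεm := hpow_le m hkm
          have hj1 : (2:ℝ) < ((n - m : ℤ) : ℝ) := by push_cast; linarith
          have hj2 : ((n - m : ℤ) : ℝ) < 3 := by push_cast; linarith
          have h1 : (2:ℤ) < n - m := by exact_mod_cast hj1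
          have h2 : (n - m : ℤ) < 3 := by exact_mod_cast hj2
          omega
      show volume (Ωk ∩ ((fun w => w + x) '' Ωk)) = 0
      rw [hempty, measure_empty]
    calc (0:ℝ≥0∞) < ENNReal.ofReal (11/4 - 9/4) := by norm_num
      _ = volume (Set.Icc (9/4:ℝ) (11/4)) := (Real.volume_Icc).symm
      _ ≤ _ := measure_mono key
end
end
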